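/- Let α > 0, β, γ, δ ≥ 0 with αδ - βγ ≠ 0 and β + γ > 0, and let H(w,w') = (α conj(w₁)w'₁ + β conj(w₂)w'₂, γ conj(w₁)w'₁ + δ conj(w₂)w'₂) be an Ω₁-Hermitian form on ℂ² (Ω₁ the positive quadrant in ℝ²). Suppose a : ℝ²×ℝ² → ℝ² is symmetric ℝ-bilinear with A_x := a(x,·) ∈ g(Ω₁) (diagonal matrices) for all x ∈ ℝ², and b : ℂ²×ℂ² → ℂ² is ℂ-bilinear such that, with B_x(w) := (1/2) b(x,w), the following hold: (i) A_x H(w,w') = H(B_x w, w') + H(w, B_x w') and Im tr B_x = 0 for all x ∈ ℝ²; (ii) for every w, w' ∈ ℂ² the map x ↦ Im H(w', b(x,w)) is diagonal; (iii) H(w, b(H(w',w''), w'')) = H(b(H(w'',w), w'), w'') for all w, w', w'' ∈ ℂ². Then a = 0 and b = 0. -/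
import Mathlib

open Matrix

/-- The `ℂ²`-valued Hermitian form
`H(w,w') = (α conj(w₁)w'₁ + β conj(w₂)w'₂, γ conj(w₁)w'₁ + δ conj(w₂)w'₂)` on `ℂ²`. -/
noncomputable def hermD3 (α β γ δ : ℝ) (w w' : Fin 2 → ℂ) : Fin 2 → ℂ :=
  ![(α : ℂ) * (starRingEnd ℂ) (w 0) * w' 0 + (β : ℂ) * (starRingEnd ℂ) (w 1) * w' 1,
    (γ : ℂ) * (starRingEnd ℂ) (w 0) * w' 0 + (δ : ℂ) * (starRingEnd ℂ) (w 1) * w' 1]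

/-- Embedding of `ℝ²` in `ℂ²`. -/
noncomputable def cvec2 (x : Fin 2 → ℝ) : Fin 2 → ℂ := fun i => (x i : ℂ)

set_option maxHeartbeats 2000000

/-- (`g₁ = 0` for the Siegel domain `D₃`, Proposition A.1.) With `a` a
symmetric bilinear form on `ℝ²` whose maps `A_x = a(x,·)` are diagonal, and `b` a
`ℂ`-bilinear map with `B_x = (1/2) b(x,·)` satisfying: (i) `B_x` is associated to
`A_x` w.r.t. `H` and `Im tr B_x = 0`; (ii) `x ↦ Im H(w', b(x,w))` is diagonal; (iii)
`H(w, b(H(w',w''),w'')) = H(b(H(w'',w),w'),w'')`, one has `a = 0` and `b = 0`. -/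
theorem g_one_zero_D3 (α β γ δ : ℝ) (hα : 0 < α) (hβ : 0 ≤ β) (hγ : 0 ≤ γ) (hδ : 0 ≤ δ)
    (hdet : α * δ - β * γ ≠ 0) (hβγ : 0 < β + γ)
    (a : (Fin 2 → ℝ) →ₗ[ℝ] (Fin 2 → ℝ) →ₗ[ℝ] (Fin 2 → ℝ))
    (hasym : ∀ u v : Fin 2 → ℝ, a u v = a v u)
    (hadiag : ∀ x : Fin 2 → ℝ, ∀ i j : Fin 2, i ≠ j → a x (Pi.single j 1) i = 0)
    (b : (Fin 2 → ℂ) →ₗ[ℂ] (Fin 2 → ℂ) →ₗ[ℂ] (Fin 2 → ℂ))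
    (hassoc : ∀ x : Fin 2 → ℝ, ∀ w w' : Fin 2 → ℂ,
      (fun i => ∑ j, (a x (Pi.single j 1) i : ℂ) * hermD3 α β γ δ w w' j)
        = hermD3 α β γ δ ((1 / 2 : ℂ) • b (cvec2 x) w) w'
          + hermD3 α β γ δ w ((1 / 2 : ℂ) • b (cvec2 x) w'))
    (htrace : ∀ x : Fin 2 → ℝ,
      (∑ i : Fin 2, (1 / 2 : ℂ) * b (cvec2 x) (Pi.single i 1) i).im = 0)
    (hbdiag : ∀ w w' : Fin 2 → ℂ, ∀ i j : Fin 2, i ≠ j →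
      ((hermD3 α β γ δ w' (b (cvec2 (Pi.single j 1)) w)) i).im = 0)
    (hiii : ∀ w w' w'' : Fin 2 → ℂ,
      hermD3 α β γ δ w (b (hermD3 α β γ δ w' w'') w'')
        = hermD3 α β γ δ (b (hermD3 α β γ δ w'' w) w') w'') :
    a = 0 ∧ b = 0 := by
  have hcv : ∀ k : Fin 2, cvec2 (Pi.single k 1) = (Pi.single k 1 : Fin 2 → ℂ) := by
    intro k; funext i; simp [cvec2, Pi.single_apply]; split <;> norm_num
  have ha001 : a (Pi.single 0 1) (Pi.single 0 1) 1 = 0 := hadiag _ 1 0 (by decide)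
  have ha010 : a (Pi.single 0 1) (Pi.single 1 1) 0 = 0 := hadiag _ 0 1 (by decide)
  have ha011 : a (Pi.single 0 1) (Pi.single 1 1) 1 = 0 := by
    rw [hasym]; exact hadiag _ 1 0 (by decide)
  have ha100 : a (Pi.single 1 1) (Pi.single 0 1) 0 = 0 := by
    rw [hasym]; exact hadiag _ 0 1 (by decide)
  have ha101 : a (Pi.single 1 1) (Pi.single 0 1) 1 = 0 := hadiag _ 1 0 (by decide)
  have ha110 : a (Pi.single 1 1) (Pi.single 1 1) 0 = 0 := hadiag _ 0 1 (by decide)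
  have E1 := congrFun (hassoc (Pi.single 0 1) (Pi.single 0 1) (Pi.single 0 1)) 0
  have E2 := congrFun (hassoc (Pi.single 0 1) (Pi.single 0 1) (Pi.single 0 1)) 1
  have E3 := congrFun (hassoc (Pi.single 0 1) (Pi.single 1 1) (Pi.single 1 1)) 0
  have E4 := congrFun (hassoc (Pi.single 0 1) (Pi.single 1 1) (Pi.single 1 1)) 1
  have E5 := congrFun (hassoc (Pi.single 0 1) (Pi.single 0 1) (Pi.single 1 1)) 0
  have E6 := congrFun (hassoc (Pi.single 0 1) (Pi.single 0 1) (Pi.single 1 1)) 1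
  have F1 := congrFun (hassoc (Pi.single 1 1) (Pi.single 0 1) (Pi.single 0 1)) 0
  have F2 := congrFun (hassoc (Pi.single 1 1) (Pi.single 0 1) (Pi.single 0 1)) 1
  have F3 := congrFun (hassoc (Pi.single 1 1) (Pi.single 1 1) (Pi.single 1 1)) 0
  have F4 := congrFun (hassoc (Pi.single 1 1) (Pi.single 1 1) (Pi.single 1 1)) 1
  have F5 := congrFun (hassoc (Pi.single 1 1) (Pi.single 0 1) (Pi.single 1 1)) 0
  have F6 := congrFun (hassoc (Pi.single 1 1) (Pi.single 0 1) (Pi.single 1 1)) 1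
  rw [hcv] at E1 E2 E3 E4 E5 E6 F1 F2 F3 F4 F5 F6
  simp [hermD3, Fin.sum_univ_two, Pi.single_apply, ha001, ha010, ha011, ha100, ha101,
    ha110, map_ofNat] at E1 E2 E3 E4 E5 E6 F1 F2 F3 F4 F5 F6
  have R1 := congrArg Complex.re E1; simp at R1
  have R2 := congrArg Complex.re E2; simp at R2
  have R3 := congrArg Complex.re E3; simp at R3
  have R4 := congrArg Complex.re E4; simp at R4
  have S1 := congrArg Complex.re F1; simp at S1
  have S2 := congrArg Complex.re F2; simp at S2
  have S3 := congrArg Complex.re F3; simp at S3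
  have S4 := congrArg Complex.re F4; simp at S4
  have hα' : α ≠ 0 := ne_of_gt hα
  -- abbreviations (propositional):
  -- A0 = a e0 e0 0, A1 = a e1 e1 1, r00/r11 real parts of b f0 f0 0 / b f0 f1 1,
  -- s00/s11 real parts of b f1 f0 0 / b f1 f1 1.
  have h1 : α * (a (Pi.single 0 1) (Pi.single 0 1) 0)
      = α * ((b (Pi.single 0 1) (Pi.single 0 1) 0).re) := by linear_combination R1
  have h2 : γ * ((b (Pi.single 0 1) (Pi.single 0 1) 0).re) = 0 := by
    linear_combination (-1 : ℝ) * R2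
  have h3 : β * (a (Pi.single 0 1) (Pi.single 0 1) 0)
      = β * ((b (Pi.single 0 1) (Pi.single 1 1) 1).re) := by linear_combination R3
  have h4 : δ * ((b (Pi.single 0 1) (Pi.single 1 1) 1).re) = 0 := by
    linear_combination (-1 : ℝ) * R4
  have hs1 : (b (Pi.single 1 1) (Pi.single 0 1) 0).re = 0 := by
    have h : α * ((b (Pi.single 1 1) (Pi.single 0 1) 0).re) = 0 := by
      linear_combination (-1 : ℝ) * S1
    exact (mul_eq_zero.mp h).resolve_left hα'
  have hs2 : γ * (a (Pi.single 1 1) (Pi.single 1 1) 1)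
      = γ * ((b (Pi.single 1 1) (Pi.single 0 1) 0).re) := by linear_combination S2
  have hs3 : β * ((b (Pi.single 1 1) (Pi.single 1 1) 1).re) = 0 := by
    linear_combination (-1 : ℝ) * S3
  have hs4 : δ * (a (Pi.single 1 1) (Pi.single 1 1) 1)
      = δ * ((b (Pi.single 1 1) (Pi.single 1 1) 1).re) := by linear_combination S4
  -- solve the real-part system for x = e0
  have key0 : a (Pi.single 0 1) (Pi.single 0 1) 0 = 0
      ∧ (b (Pi.single 0 1) (Pi.single 0 1) 0).re = 0
      ∧ (b (Pi.single 0 1) (Pi.single 1 1) 1).re = 0 := by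
    rcases eq_or_ne γ 0 with hg | hg
    · have hb' : β ≠ 0 := by intro h; rw [h, hg] at hβγ; simp at hβγ
      have hd' : δ ≠ 0 := by intro h; exact hdet (by rw [hg, h]; ring)
      have hr11 : (b (Pi.single 0 1) (Pi.single 1 1) 1).re = 0 :=
        (mul_eq_zero.mp h4).resolve_left hd'
      have hA0 : a (Pi.single 0 1) (Pi.single 0 1) 0 = 0 := by
        rw [hr11, mul_zero] at h3
        exact (mul_eq_zero.mp h3).resolve_left hb'
      have hr00 : (b (Pi.single 0 1) (Pi.single 0 1) 0).re = 0 := by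
        rw [hA0, mul_zero] at h1
        exact (mul_eq_zero.mp h1.symm).resolve_left hα'
      exact ⟨hA0, hr00, hr11⟩
    · have hr00 : (b (Pi.single 0 1) (Pi.single 0 1) 0).re = 0 :=
        (mul_eq_zero.mp h2).resolve_left hg
      have hA0 : a (Pi.single 0 1) (Pi.single 0 1) 0 = 0 := by
        rw [hr00, mul_zero] at h1
        exact (mul_eq_zero.mp h1).resolve_left hα'
      have hr11 : (b (Pi.single 0 1) (Pi.single 1 1) 1).re = 0 := by
        rcases eq_or_ne δ 0 with hd | hd
        · have hb' : β ≠ 0 := by intro h; exact hdet (by rw [hd, h]; ring)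
          rw [hA0, mul_zero] at h3
          exact (mul_eq_zero.mp h3.symm).resolve_left hb'
        · exact (mul_eq_zero.mp h4).resolve_left hd
      exact ⟨hA0, hr00, hr11⟩
  obtain ⟨hA0, hr00, hr11⟩ := key0
  -- solve the real-part system for x = e1
  have key1 : a (Pi.single 1 1) (Pi.single 1 1) 1 = 0
      ∧ (b (Pi.single 1 1) (Pi.single 1 1) 1).re = 0 := by
    rcases eq_or_ne γ 0 with hg | hg
    · have hb' : β ≠ 0 := by intro h; rw [h, hg] at hβγ; simp at hβγ
      have hd' : δ ≠ 0 := by intro h; exact hdet (by rw [hg, h]; ring)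
      have hs11 : (b (Pi.single 1 1) (Pi.single 1 1) 1).re = 0 :=
        (mul_eq_zero.mp hs3).resolve_left hb'
      have hA1 : a (Pi.single 1 1) (Pi.single 1 1) 1 = 0 := by
        rw [hs11, mul_zero] at hs4
        exact (mul_eq_zero.mp hs4).resolve_left hd'
      exact ⟨hA1, hs11⟩
    · have hA1 : a (Pi.single 1 1) (Pi.single 1 1) 1 = 0 := by
        rw [hs1, mul_zero] at hs2
        exact (mul_eq_zero.mp hs2).resolve_left hg
      have hs11 : (b (Pi.single 1 1) (Pi.single 1 1) 1).re = 0 := by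
        rcases eq_or_ne δ 0 with hd | hd
        · have hb' : β ≠ 0 := by intro h; exact hdet (by rw [hd, h]; ring)
          exact (mul_eq_zero.mp hs3).resolve_left hb'
        · rw [hA1, mul_zero] at hs4
          exact (mul_eq_zero.mp hs4.symm).resolve_left hd
      exact ⟨hA1, hs11⟩
  obtain ⟨hA1, hs11⟩ := key1
  -- off-diagonal complex entries vanish, via the determinant condition
  have hdetC : ((α * δ - β * γ : ℝ) : ℂ) ≠ 0 := by exact_mod_cast hdet
  have hc10 : b (Pi.single 0 1) (Pi.single 1 1) 0 = 0 := by
    have h : ((α * δ - β * γ : ℝ) : ℂ) * (b (Pi.single 0 1) (Pi.single 1 1) 0) = 0 := by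
      push_cast
      linear_combination (-2 * (δ : ℂ)) * E5 + (2 * (β : ℂ)) * E6
    exact (mul_eq_zero.mp h).resolve_left hdetC
  have hc01 : b (Pi.single 0 1) (Pi.single 0 1) 1 = 0 := by
    have h : ((α * δ - β * γ : ℝ) : ℂ)
        * (starRingEnd ℂ) (b (Pi.single 0 1) (Pi.single 0 1) 1) = 0 := by
      push_cast
      linear_combination (2 * (γ : ℂ)) * E5 + (-2 * (α : ℂ)) * E6
    have h' := (mul_eq_zero.mp h).resolve_left hdetC
    simpa using congrArg (starRingEnd ℂ) h'
  have hd10 : b (Pi.single 1 1) (Pi.single 1 1) 0 = 0 := by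
    have h : ((α * δ - β * γ : ℝ) : ℂ) * (b (Pi.single 1 1) (Pi.single 1 1) 0) = 0 := by
      push_cast
      linear_combination (-2 * (δ : ℂ)) * F5 + (2 * (β : ℂ)) * F6
    exact (mul_eq_zero.mp h).resolve_left hdetC
  have hd01 : b (Pi.single 1 1) (Pi.single 0 1) 1 = 0 := by
    have h : ((α * δ - β * γ : ℝ) : ℂ)
        * (starRingEnd ℂ) (b (Pi.single 1 1) (Pi.single 0 1) 1) = 0 := by
      push_cast
      linear_combination (2 * (γ : ℂ)) * F5 + (-2 * (α : ℂ)) * F6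
    have h' := (mul_eq_zero.mp h).resolve_left hdetC
    simpa using congrArg (starRingEnd ℂ) h'
  -- imaginary parts, via trace and diagonality conditions
  have T0 := htrace (Pi.single 0 1)
  have T1 := htrace (Pi.single 1 1)
  rw [hcv] at T0 T1
  simp [Fin.sum_univ_two] at T0 T1
  have D1 := hbdiag (Pi.single 0 1) (Pi.single 0 1) 0 1 (by decide)
  have D2 := hbdiag (Pi.single 0 1) (Pi.single 0 1) 1 0 (by decide)
  have D3 := hbdiag (Pi.single 1 1) (Pi.single 1 1) 1 0 (by decide)
  rw [hcv] at D1 D2 D3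
  simp [hermD3, Pi.single_apply] at D1 D2 D3
  have his00 : (b (Pi.single 1 1) (Pi.single 0 1) 0).im = 0 := D1.resolve_left hα'
  have his11 : (b (Pi.single 1 1) (Pi.single 1 1) 1).im = 0 := by
    rw [his00] at T1; linarith
  have hi00 : (b (Pi.single 0 1) (Pi.single 0 1) 0).im = 0 := by
    rcases D2 with hg | hi
    · have hd' : δ ≠ 0 := by intro h; exact hdet (by rw [hg, h]; ring)
      have hi11 : (b (Pi.single 0 1) (Pi.single 1 1) 1).im = 0 := D3.resolve_left hd'
      rw [hi11] at T0; linarith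
    · exact hi
  have hi11 : (b (Pi.single 0 1) (Pi.single 1 1) 1).im = 0 := by
    rw [hi00] at T0; linarith
  -- assemble: all matrix entries of b vanish
  have hb00 : b (Pi.single 0 1) (Pi.single 0 1) 0 = 0 := by
    apply Complex.ext <;> simp [hr00, hi00]
  have hb11 : b (Pi.single 0 1) (Pi.single 1 1) 1 = 0 := by
    apply Complex.ext <;> simp [hr11, hi11]
  have hb00' : b (Pi.single 1 1) (Pi.single 0 1) 0 = 0 := by
    apply Complex.ext <;> simp [hs1, his00]
  have hb11' : b (Pi.single 1 1) (Pi.single 1 1) 1 = 0 := by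
    apply Complex.ext <;> simp [hs11, his11]
  -- conclude by bilinearity
  have hxR : ∀ x : Fin 2 → ℝ, x = x 0 • (Pi.single 0 1 : Fin 2 → ℝ) + x 1 • (Pi.single 1 1 : Fin 2 → ℝ) := by
    intro x; funext i; fin_cases i <;> simp [Pi.single_apply]
  have hxC : ∀ w : Fin 2 → ℂ, w = w 0 • (Pi.single 0 1 : Fin 2 → ℂ) + w 1 • (Pi.single 1 1 : Fin 2 → ℂ) := by
    intro w; funext i; fin_cases i <;> simp [Pi.single_apply]
  constructor
  · apply LinearMap.ext; intro x
    apply LinearMap.ext; intro y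
    rw [hxR x, hxR y]
    funext i
    simp only [map_add, _root_.map_smul, LinearMap.add_apply, LinearMap.smul_apply,
      Pi.add_apply, Pi.smul_apply, smul_eq_mul, LinearMap.zero_apply, Pi.zero_apply]
    fin_cases i <;>
      simp [hA0, hA1, ha001, ha010, ha011, ha100, ha101, ha110]
  · apply LinearMap.ext; intro x
    apply LinearMap.ext; intro y
    rw [hxC x, hxC y]
    funext i
    simp only [map_add, _root_.map_smul, LinearMap.add_apply, LinearMap.smul_apply,
      Pi.add_apply, Pi.smul_apply, smul_eq_mul, LinearMap.zero_apply, Pi.zero_apply]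
    fin_cases i <;>
      simp [hb00, hb11, hb00', hb11', hc10, hc01, hd10, hd01]
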